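/- Let β_1, β_2, β_3 ∈ F be pairwise distinct. If A and B are 3×3 matrices over F such that for each i ∈ {1,2,3} the first row of T(β_i) · A · T(−β_i) equals the first row of T(β_i) · B · T(−β_i), then A = B. In other words, the first rows of the three conjugates T(β_i) W T(−β_i) determine the 3×3 matrix W uniquely when β_1, β_2, β_3 are distinct. -/
import Mathlib


/-- The 3×3 matrix `T(β)` with rows `(1, β, β²)`, `(0, 1, 2β)`, `(0, 0, 1)`. -/
def Tmat {F : Type*} [Field F] (β : F) : Matrix (Fin 3) (Fin 3) F :=
  !![1, β, β ^ 2; 0, 1, 2 * β; 0, 0, 1]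

private lemma vand3 {F : Type*} [Field F] (β₁ β₂ β₃ a b c : F)
    (h12 : β₁ ≠ β₂) (h13 : β₁ ≠ β₃) (h23 : β₂ ≠ β₃)
    (e1 : a + (β₁ * b + β₁ ^ 2 * c) = 0)
    (e2 : a + (β₂ * b + β₂ ^ 2 * c) = 0)
    (e3 : a + (β₃ * b + β₃ ^ 2 * c) = 0) :
    a = 0 ∧ b = 0 ∧ c = 0 := by
  have d12 : β₁ - β₂ ≠ 0 := sub_ne_zero.mpr h12
  have d13 : β₁ - β₃ ≠ 0 := sub_ne_zero.mpr h13
  have d23 : β₂ - β₃ ≠ 0 := sub_ne_zero.mpr h23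
  have f12 : b + (β₁ + β₂) * c = 0 := by
    apply mul_left_cancel₀ d12
    ring_nf
    linear_combination e1 - e2
  have f13 : b + (β₁ + β₃) * c = 0 := by
    apply mul_left_cancel₀ d13
    ring_nf
    linear_combination e1 - e3
  have hc : c = 0 := by
    apply mul_left_cancel₀ d23
    ring_nf
    linear_combination f12 - f13
  have hb : b = 0 := by linear_combination f12 - (β₁ + β₂) * hc
  have ha : a = 0 := by linear_combination e1 - β₁ * hb - β₁ ^ 2 * hc
  exact ⟨ha, hb, hc⟩

theorem first_rows_of_conjugates_determine_matrix
    {F : Type*} [Field F] (β₁ β₂ β₃ : F)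
    (h12 : β₁ ≠ β₂) (h13 : β₁ ≠ β₃) (h23 : β₂ ≠ β₃)
    (A B : Matrix (Fin 3) (Fin 3) F)
    (h1 : (Tmat β₁ * A * Tmat (-β₁)) 0 = (Tmat β₁ * B * Tmat (-β₁)) 0)
    (h2 : (Tmat β₂ * A * Tmat (-β₂)) 0 = (Tmat β₂ * B * Tmat (-β₂)) 0)
    (h3 : (Tmat β₃ * A * Tmat (-β₃)) 0 = (Tmat β₃ * B * Tmat (-β₃)) 0) :
    A = B := by
  have p10 := congrFun h1 0
  have p11 := congrFun h1 1
  have p12 := congrFun h1 2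
  have p20 := congrFun h2 0
  have p21 := congrFun h2 1
  have p22 := congrFun h2 2
  have p30 := congrFun h3 0
  have p31 := congrFun h3 1
  have p32 := congrFun h3 2
  simp [Tmat, Matrix.mul_apply, Matrix.vecMul, dotProduct, Fin.sum_univ_succ]
    at p10 p11 p12 p20 p21 p22 p30 p31 p32
  obtain ⟨a0, a1, a2⟩ := vand3 β₁ β₂ β₃ (A 0 0 - B 0 0) (A 1 0 - B 1 0) (A 2 0 - B 2 0)
    h12 h13 h23 (by linear_combination p10) (by linear_combination p20)
    (by linear_combination p30)
  obtain ⟨b0, b1, b2⟩ := vand3 β₁ β₂ β₃ (A 0 1 - B 0 1) (A 1 1 - B 1 1) (A 2 1 - B 2 1)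
    h12 h13 h23
    (by linear_combination p11 + β₁ * a0 + β₁ ^ 2 * a1 + β₁ ^ 3 * a2)
    (by linear_combination p21 + β₂ * a0 + β₂ ^ 2 * a1 + β₂ ^ 3 * a2)
    (by linear_combination p31 + β₃ * a0 + β₃ ^ 2 * a1 + β₃ ^ 3 * a2)
  obtain ⟨c0, c1, c2⟩ := vand3 β₁ β₂ β₃ (A 0 2 - B 0 2) (A 1 2 - B 1 2) (A 2 2 - B 2 2)
    h12 h13 h23
    (by linear_combination p12 - β₁ ^ 2 * a0 - β₁ ^ 3 * a1 - β₁ ^ 4 * a2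
      + 2 * β₁ * b0 + 2 * β₁ ^ 2 * b1 + 2 * β₁ ^ 3 * b2)
    (by linear_combination p22 - β₂ ^ 2 * a0 - β₂ ^ 3 * a1 - β₂ ^ 4 * a2
      + 2 * β₂ * b0 + 2 * β₂ ^ 2 * b1 + 2 * β₂ ^ 3 * b2)
    (by linear_combination p32 - β₃ ^ 2 * a0 - β₃ ^ 3 * a1 - β₃ ^ 4 * a2
      + 2 * β₃ * b0 + 2 * β₃ ^ 2 * b1 + 2 * β₃ ^ 3 * b2)
  ext i j
  fin_cases i <;> fin_cases j <;>
    [exact sub_eq_zero.mp a0; exact sub_eq_zero.mp b0; exact sub_eq_zero.mp c0;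
     exact sub_eq_zero.mp a1; exact sub_eq_zero.mp b1; exact sub_eq_zero.mp c1;
     exact sub_eq_zero.mp a2; exact sub_eq_zero.mp b2; exact sub_eq_zero.mp c2]
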